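/- arXiv:1302.5248 — 2 statements merged into one kernel-verified Lean document; each statement's English description precedes it below -/
import Mathlib

section
/- Let E(t) = sin t + i·ξ(t) with ξ'(t) = sin²t/√(1+sin²t). The signed curvature of the curve E at parameter t equals 2·sin t. -/
open Real

/-- The function ξ, antiderivative of sin²t/√(1+sin²t) vanishing at 0. -/
noncomputable def xi (t : ℝ) : ℝ := ∫ r in (0:ℝ)..t, Real.sin r ^ 2 / Real.sqrt (1 + Real.sin r ^ 2)

/-- The rectangular elastica E(t) = sin t + i ξ(t). -/
noncomputable def E (t : ℝ) : ℂ := Real.sin t + xi t * Complex.I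

/-- Signed curvature of a planar curve f (as a function of the parameter t),
given by the classical formula (x'y'' − y'x'')/|f'|³. -/
noncomputable def signedCurvature (f : ℝ → ℂ) (t : ℝ) : ℝ :=
  ((deriv f t).re * (deriv (deriv f) t).im - (deriv f t).im * (deriv (deriv f) t).re) /
    ‖deriv f t‖ ^ 3

/-! With `g t = √(1 + sin² t)` one has `E' = cos t + i sin² t / g`, hence `|E'|² = 1 / g²` because
`cos² t · g² + sin⁴ t = 1`, and `E'' = -sin t + i sin t cos t (2 + sin² t) / g³`. The numerator
`x'y'' - y'x''` then collapses to `2 sin t / g³`, and dividing by `|E'|³ = 1 / g³` leaves `2 sin t`. -/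

theorem HasDerivAt.complex_mk {x y : ℝ → ℝ} {x' y' t : ℝ} (hx : HasDerivAt x x' t)
    (hy : HasDerivAt y y' t) : HasDerivAt (fun s => (⟨x s, y s⟩ : ℂ)) ⟨x', y'⟩ t := by
  simp_rw [Complex.mk_eq_add_mul_I]
  exact hx.ofReal_comp.add (hy.ofReal_comp.mul_const Complex.I)

lemma sqrt_one_add_sin_sq_pos (t : ℝ) : 0 < √(1 + sin t ^ 2) := by positivity

lemma sq_sqrt_one_add_sin_sq (t : ℝ) : √(1 + sin t ^ 2) ^ 2 = 1 + sin t ^ 2 :=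
  sq_sqrt (by positivity)

lemma hasDerivAt_xi (t : ℝ) : HasDerivAt xi (sin t ^ 2 / √(1 + sin t ^ 2)) t := by
  have hcont : Continuous fun r => sin r ^ 2 / √(1 + sin r ^ 2) :=
    (continuous_sin.pow 2).div (by fun_prop) fun r => (sqrt_one_add_sin_sq_pos r).ne'
  exact (hcont.integral_hasStrictDerivAt 0 t).hasDerivAt

lemma hasDerivAt_sin_sq_div_sqrt (t : ℝ) :
    HasDerivAt (fun r => sin r ^ 2 / √(1 + sin r ^ 2))
      (sin t * cos t * (2 + sin t ^ 2) / √(1 + sin t ^ 2) ^ 3) t := by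
  have hg : HasDerivAt (fun r => √(1 + sin r ^ 2)) (sin t * cos t / √(1 + sin t ^ 2)) t := by
    refine ((((hasDerivAt_sin t).fun_pow 2).const_add 1).sqrt (by positivity)).congr_deriv ?_
    field_simp
    ring
  have hg0 := sqrt_one_add_sin_sq_pos t
  refine (((hasDerivAt_sin t).fun_pow 2).fun_div hg hg0.ne').congr_deriv ?_
  field_simp
  linear_combination 2 * sin t * cos t * sq_sqrt_one_add_sin_sq t

lemma E_eq_mk : E = fun t => ⟨sin t, xi t⟩ :=
  funext fun _ => (Complex.mk_eq_add_mul_I _ _).symm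

lemma deriv_E : deriv E = fun t => ⟨cos t, sin t ^ 2 / √(1 + sin t ^ 2)⟩ := by
  funext t
  rw [E_eq_mk]
  exact ((hasDerivAt_sin t).complex_mk (hasDerivAt_xi t)).deriv

lemma deriv_deriv_E (t : ℝ) :
    deriv (deriv E) t = ⟨-sin t, sin t * cos t * (2 + sin t ^ 2) / √(1 + sin t ^ 2) ^ 3⟩ := by
  rw [deriv_E]
  exact ((hasDerivAt_cos t).complex_mk (hasDerivAt_sin_sq_div_sqrt t)).deriv

lemma norm_deriv_E (t : ℝ) : ‖deriv E t‖ = (√(1 + sin t ^ 2))⁻¹ := by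
  have hg0 := sqrt_one_add_sin_sq_pos t
  have hnormSq : Complex.normSq (deriv E t) = (√(1 + sin t ^ 2))⁻¹ ^ 2 := by
    rw [deriv_E, Complex.normSq_mk]
    field_simp
    linear_combination cos t ^ 2 * sq_sqrt_one_add_sin_sq t + (1 + sin t ^ 2) * sin_sq_add_cos_sq t
  rw [Complex.norm_def, hnormSq, sqrt_sq (by positivity)]

theorem stmt_2 (t : ℝ) : signedCurvature E t = 2 * Real.sin t := by
  have hg0 := sqrt_one_add_sin_sq_pos t
  rw [signedCurvature, norm_deriv_E, deriv_deriv_E, deriv_E]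
  field_simp
  linear_combination sin t * ((2 + sin t ^ 2) * cos_sq' t + sin t ^ 2 * sq_sqrt_one_add_sin_sq t)
end

section
/- Let F : [0,L] → ℂ be a unit speed left c-curve from (0, direction angle 0) with turning angle exactly π ending on the line Im z = d (where d = ξ(π)), whose bending energy equals d, and which neither begins nor ends with a line segment (its direction angle τ satisfies 0 < τ(s) < π for s ∈ (0,L)). Then F is unique: any two such curves are equal; in particular F equals the arclength parameterization of E_{[0,π]} where E(t) = sin t + i·ξ(t). -/
open Real MeasureTheory

/-- Direction angle of the unit speed curve with curvature κ and initial direction angle 0. -/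
noncomputable def dirAngle (κ : ℝ → ℝ) (s : ℝ) : ℝ := ∫ r in (0:ℝ)..s, κ r

/-- The unit speed curve starting at 0 with direction angle 0 and signed curvature κ. -/
noncomputable def curveOf (κ : ℝ → ℝ) (s : ℝ) : ℂ :=
  ∫ r in (0:ℝ)..s, Complex.exp (dirAngle κ r * Complex.I)

/-- `IsOptimalUTurn L κ` says the unit speed curve of length `L` with signed curvature `κ`,
starting at 0 with direction angle 0, is a left c-curve with turning angle exactly π, ending on
the line Im z = ξ(π), with bending energy ξ(π), whose direction angle lies strictly between 0 and π
in the interior (so it neither begins nor ends with a line segment). -/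
def IsOptimalUTurn (L : ℝ) (κ : ℝ → ℝ) : Prop :=
  0 < L ∧
  IntervalIntegrable κ volume 0 L ∧
  IntervalIntegrable (fun s => κ s ^ 2) volume 0 L ∧
  (∀ᵐ s ∂(volume.restrict (Set.Icc 0 L)), 0 ≤ κ s) ∧
  (∫ s in (0:ℝ)..L, κ s) = π ∧
  (curveOf κ L).im = xi π ∧
  (1 / 4) * (∫ s in (0:ℝ)..L, κ s ^ 2) = xi π ∧
  (∀ s ∈ Set.Ioo 0 L, dirAngle κ s ∈ Set.Ioo 0 π)

/-!
Write `τ` for the direction angle. As `τ` increases from `0` to `π`, the substitution `u = τ(s)`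
gives `∫ κ √(sin τ) = ∫₀^π √(sin u) du = 2ξ(π)`, while `∫ sin τ = Im F(L) = ξ(π)` and
`∫ κ² = 4ξ(π)`. Hence `∫ (κ - 2√(sin τ))² = 0`, i.e. `τ' = 2√(sin τ)` almost everywhere.
Separating variables, `s = ∫₀^{τ(s)} du / (2√(sin u))`, and the right side is strictly increasing
in `τ(s)`; so `τ`, the length `L` and the curve are determined.
-/

open Set ENNReal

lemma integral_comp_sin_eq_two_mul {f : ℝ → ℝ} (hf : Continuous fun u => f (sin u)) :
    ∫ u in (0:ℝ)..π, f (sin u) = 2 * ∫ u in (0:ℝ)..π / 2, f (sin u) := by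
  have hsymm : ∫ u in (π / 2)..π, f (sin u) = ∫ u in (0:ℝ)..π / 2, f (sin u) := by
    have := intervalIntegral.integral_comp_sub_left (fun u => f (sin u)) π (a := 0) (b := π / 2)
    rw [show π - π / 2 = π / 2 by ring, sub_zero] at this
    simpa only [sin_pi_sub] using this.symm
  rw [← intervalIntegral.integral_add_adjacent_intervals (b := π / 2) (hf.intervalIntegrable _ _)
    (hf.intervalIntegrable _ _), hsymm]
  ring

lemma hasDerivAt_arcsin_sin_sq {x : ℝ} (hx : x ∈ Ioo 0 (π / 2)) :
    HasDerivAt (fun t => arcsin (sin t ^ 2)) (2 * sin x / √(1 + sin x ^ 2)) x := by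
  have hsin : 0 < sin x := sin_pos_of_pos_of_lt_pi hx.1 (by linarith [hx.2, pi_pos])
  have hcos : 0 < cos x := cos_pos_of_mem_Ioo ⟨by linarith [hx.1, pi_pos], hx.2⟩
  have hsin_lt : sin x < 1 := by nlinarith [sin_sq_add_cos_sq x, sin_le_one x]
  have hsq : HasDerivAt (fun t => sin t ^ 2) (2 * sin x * cos x) x := by
    simpa [mul_comm, mul_assoc, mul_left_comm] using (hasDerivAt_sin x).fun_pow 2
  refine ((hasDerivAt_arcsin (by nlinarith) (by nlinarith)).comp x hsq).congr_deriv ?_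
  have h : 1 - (sin x ^ 2) ^ 2 = cos x ^ 2 * (1 + sin x ^ 2) := by
    nlinarith [sin_sq_add_cos_sq x]
  rw [h, sqrt_mul (sq_nonneg _), sqrt_sq hcos.le]
  field_simp

/-- The substitution `u = arcsin (sin² t)`. -/
lemma integral_sqrt_sin_eq_two_mul :
    ∫ u in (0:ℝ)..π / 2, √(sin u) = 2 * ∫ t in (0:ℝ)..π / 2, sin t ^ 2 / √(1 + sin t ^ 2) := by
  have hpi : (0:ℝ) ≤ π / 2 := by positivity
  have hsqrt_pos : ∀ t, 0 < √(1 + sin t ^ 2) := fun t => sqrt_pos.2 (by positivity)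
  have key := intervalIntegral.integral_deriv_smul_comp'' (f := fun t => arcsin (sin t ^ 2))
    (f' := fun t => 2 * sin t / √(1 + sin t ^ 2)) (g := fun u => √(sin u))
    (by fun_prop)
    (fun x hx => by
      rw [min_eq_left hpi, max_eq_right hpi] at hx
      exact (hasDerivAt_arcsin_sin_sq hx).hasDerivWithinAt)
    ((by fun_prop : Continuous fun t => 2 * sin t).div (by fun_prop)
      fun t => (hsqrt_pos t).ne').continuousOn
    (by fun_prop)
  simp only [sin_zero, sin_pi_div_two, zero_pow two_ne_zero, one_pow, arcsin_zero,
    arcsin_one] at key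
  rw [← key, ← intervalIntegral.integral_const_mul]
  refine intervalIntegral.integral_congr fun t ht => ?_
  rw [uIcc_of_le hpi] at ht
  have hsin : 0 ≤ sin t := sin_nonneg_of_nonneg_of_le_pi ht.1 (by linarith [ht.2, pi_pos])
  have harcsin : sin (arcsin (sin t ^ 2)) = sin t ^ 2 :=
    sin_arcsin (by nlinarith) (by nlinarith [sin_le_one t])
  simp only [Function.comp, smul_eq_mul, harcsin, sqrt_sq hsin]
  field_simp

lemma integral_sqrt_sin_eq_two_mul_xi : ∫ u in (0:ℝ)..π, √(sin u) = 2 * xi π := by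
  rw [xi, integral_comp_sin_eq_two_mul (f := fun w => w ^ 2 / √(1 + w ^ 2)) (by
      refine Continuous.div (by fun_prop) (by fun_prop) fun u => (sqrt_pos.2 ?_).ne'; positivity),
    integral_comp_sin_eq_two_mul (f := fun w => √w) (by fun_prop), integral_sqrt_sin_eq_two_mul]

section MonotonePushforward

variable {τ : ℝ → ℝ} {a b : ℝ}

lemma exists_preimage_Iic_inter_Ioc_eq (hab : a ≤ b) (hmono : MonotoneOn τ (Icc a b))
    (hcont : ContinuousOn τ (Icc a b)) {u : ℝ} (hu : τ a ≤ u) :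
    ∃ c ∈ Icc a b, τ ⁻¹' Iic u ∩ Ioc a b = Ioc a c ∧ τ c = min u (τ b) := by
  set S := Icc a b ∩ τ ⁻¹' Iic u
  have hS_bdd : BddAbove S := bddAbove_Icc.mono inter_subset_left
  have haS : a ∈ S := ⟨left_mem_Icc.2 hab, hu⟩
  have hcS : sSup S ∈ S :=
    (hcont.preimage_isClosed_of_isClosed isClosed_Icc isClosed_Iic).csSup_mem ⟨a, haS⟩ hS_bdd
  refine ⟨sSup S, hcS.1, ?_, ?_⟩
  · ext s
    refine ⟨fun ⟨hτs, hs⟩ => ⟨hs.1, le_csSup hS_bdd ⟨Ioc_subset_Icc_self hs, hτs⟩⟩, ?_⟩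
    rintro ⟨has, hsc⟩
    have hs : s ∈ Icc a b := ⟨has.le, hsc.trans hcS.1.2⟩
    exact ⟨(hmono hs hcS.1 hsc).trans hcS.2, has, hs.2⟩
  · have hτab := hmono (left_mem_Icc.2 hab) (right_mem_Icc.2 hab) hab
    obtain ⟨c, hc, hτc⟩ := intermediate_value_Icc hab hcont
      ⟨le_min hu hτab, min_le_right u (τ b)⟩
    have hcS' : c ∈ S := ⟨hc, hτc.trans_le (min_le_left _ _)⟩
    refine le_antisymm (le_min hcS.2 (hmono hcS.1 (right_mem_Icc.2 hab) hcS.1.2)) ?_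
    exact hτc ▸ hmono hc hcS.1 (le_csSup hS_bdd hcS')

theorem map_restrict_Ioc_eq_of_monotoneOn {μ : Measure ℝ} (hab : a ≤ b)
    (hmono : MonotoneOn τ (Icc a b)) (hcont : ContinuousOn τ (Icc a b))
    (hμ : ∀ c ∈ Icc a b, μ (Ioc a c) = ENNReal.ofReal (τ c - τ a)) :
    (μ.restrict (Ioc a b)).map τ = volume.restrict (Ioc (τ a) (τ b)) := by
  have : IsFiniteMeasure (μ.restrict (Ioc a b)) := ⟨by simp [hμ b ⟨hab, le_rfl⟩]⟩
  have hτ : AEMeasurable τ (μ.restrict (Ioc a b)) :=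
    (hcont.mono Ioc_subset_Icc_self).aemeasurable measurableSet_Ioc
  refine Measure.ext_of_Iic _ _ fun u => ?_
  rw [Measure.map_apply_of_aemeasurable hτ measurableSet_Iic,
    Measure.restrict_apply' measurableSet_Ioc, Measure.restrict_apply' measurableSet_Ioc]
  rcases lt_or_ge u (τ a) with hu | hu
  · have hleft : τ ⁻¹' Iic u ∩ Ioc a b = ∅ := by
      refine eq_empty_of_forall_notMem fun s ⟨hτs, hs⟩ => ?_
      exact (hu.trans_le (hmono (left_mem_Icc.2 hab) (Ioc_subset_Icc_self hs) hs.1.le)).not_ge hτs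
    have hright : Iic u ∩ Ioc (τ a) (τ b) = ∅ :=
      eq_empty_of_forall_notMem fun s ⟨hsu, hs⟩ => (hu.trans hs.1).not_ge hsu
    rw [hleft, hright, measure_empty, measure_empty]
  · obtain ⟨c, hc, hpre, hτc⟩ := exists_preimage_Iic_inter_Ioc_eq hab hmono hcont hu
    rw [hpre, hμ c hc, hτc, inter_comm, Ioc_inter_Iic, Real.volume_Ioc, min_comm]

end MonotonePushforward

section DirAngle

variable {κ : ℝ → ℝ} {L : ℝ}

lemma dirAngle_zero (κ : ℝ → ℝ) : dirAngle κ 0 = 0 := intervalIntegral.integral_same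

lemma continuousOn_dirAngle (hL : 0 ≤ L) (hκ : IntervalIntegrable κ volume 0 L) :
    ContinuousOn (dirAngle κ) (Icc 0 L) := by
  rw [← uIcc_of_le hL]
  exact intervalIntegral.continuousOn_primitive_interval' hκ left_mem_uIcc

lemma monotoneOn_dirAngle (hκ : IntervalIntegrable κ volume 0 L)
    (hκ_nonneg : ∀ᵐ s ∂volume.restrict (Icc 0 L), 0 ≤ κ s) :
    MonotoneOn (dirAngle κ) (Icc 0 L) := by
  intro s hs t ht hst
  have hκ' : ∀ {x}, x ∈ Icc 0 L → IntervalIntegrable κ volume 0 x := fun hx =>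
    hκ.mono_set (uIcc_subset_uIcc_left (Icc_subset_uIcc hx))
  have hinc : 0 ≤ ∫ r in s..t, κ r :=
    intervalIntegral.integral_nonneg_of_ae_restrict hst
      (ae_restrict_of_ae_restrict_of_subset (Icc_subset_Icc hs.1 ht.2) hκ_nonneg)
  rw [← intervalIntegral.integral_interval_sub_left (hκ' ht) (hκ' hs)] at hinc
  exact sub_nonneg.1 hinc

lemma withDensity_Ioc_eq_dirAngle (hκ : IntervalIntegrable κ volume 0 L)
    (hκ_nonneg : ∀ᵐ s ∂volume.restrict (Icc 0 L), 0 ≤ κ s) {c : ℝ} (hc : c ∈ Icc 0 L) :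
    volume.withDensity (fun s => ENNReal.ofReal (κ s)) (Ioc 0 c) =
      ENNReal.ofReal (dirAngle κ c) := by
  have hκc : IntervalIntegrable κ volume 0 c :=
    hκ.mono_set (uIcc_subset_uIcc_left (Icc_subset_uIcc hc))
  rw [withDensity_apply _ measurableSet_Ioc, ← ofReal_integral_eq_lintegral_ofReal hκc.1
    (ae_restrict_of_ae_restrict_of_subset (Ioc_subset_Icc_self.trans (Icc_subset_Icc_right hc.2))
      hκ_nonneg), dirAngle, intervalIntegral.integral_of_le hc.1]

/-- `dirAngle κ` pushes `κ ds` forward to `du`, so no differentiability of `dirAngle κ` and no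
integrability of `g` is needed. -/
theorem lintegral_comp_dirAngle_mul (hκ : IntervalIntegrable κ volume 0 L)
    (hκ_nonneg : ∀ᵐ s ∂volume.restrict (Icc 0 L), 0 ≤ κ s) {c : ℝ} (hc : c ∈ Icc 0 L)
    {g : ℝ → ℝ≥0∞} (hg : Measurable g) :
    ∫⁻ s in Ioc 0 c, g (dirAngle κ s) * ENNReal.ofReal (κ s) =
      ∫⁻ u in Ioc 0 (dirAngle κ c), g u := by
  have hsub : Icc 0 c ⊆ Icc 0 L := Icc_subset_Icc_right hc.2
  have hcont := (continuousOn_dirAngle (hc.1.trans hc.2) hκ).mono hsub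
  have hmap := map_restrict_Ioc_eq_of_monotoneOn hc.1
    ((monotoneOn_dirAngle hκ hκ_nonneg).mono hsub) hcont
    fun x hx => by
      rw [dirAngle_zero, sub_zero]
      exact withDensity_Ioc_eq_dirAngle hκ hκ_nonneg (hsub hx)
  rw [dirAngle_zero, restrict_withDensity measurableSet_Ioc] at hmap
  have hτ : AEMeasurable (dirAngle κ) (volume.restrict (Ioc 0 c)) :=
    (hcont.mono Ioc_subset_Icc_self).aemeasurable measurableSet_Ioc
  have hκc : AEMeasurable (fun s => ENNReal.ofReal (κ s)) (volume.restrict (Ioc 0 c)) :=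
    (hκ.mono_set (uIcc_subset_uIcc_left (Icc_subset_uIcc hc))).1.aemeasurable.ennreal_ofReal
  rw [← hmap, lintegral_map' hg.aemeasurable (hτ.mono_ac (withDensity_absolutelyContinuous _ _)),
    lintegral_withDensity_eq_lintegral_mul₀ (g := fun s => g (dirAngle κ s)) hκc
      (hg.comp_aemeasurable hτ)]
  simp only [Pi.mul_apply, mul_comm]

end DirAngle

lemma im_curveOf {κ : ℝ → ℝ} {L : ℝ} (hL : 0 ≤ L) (hκ : IntervalIntegrable κ volume 0 L) :
    (curveOf κ L).im = ∫ s in (0:ℝ)..L, sin (dirAngle κ s) := by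
  have hcont : ContinuousOn (fun r => Complex.exp (dirAngle κ r * Complex.I)) (uIcc 0 L) := by
    have := continuousOn_dirAngle hL hκ
    rw [← uIcc_of_le hL] at this
    fun_prop
  rw [curveOf, ← Complex.imCLM_apply,
    ← Complex.imCLM.intervalIntegral_comp_comm hcont.intervalIntegrable]
  simp [Complex.exp_ofReal_mul_I_im]

/-- Along the optimal curve `κ = 2 √(sin τ)`, so `ds = dτ / (2 √(sin τ))`: this is the arclength
at which the direction angle reaches `θ`. -/
noncomputable def arclengthAtAngle (θ : ℝ) : ℝ≥0∞ :=
  ∫⁻ u in Ioc 0 θ, ENNReal.ofReal (2 * √(sin u))⁻¹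

lemma strictMonoOn_arclengthAtAngle :
    StrictMonoOn arclengthAtAngle {θ ∈ Icc 0 π | arclengthAtAngle θ ≠ ⊤} := by
  rintro θ₁ ⟨hθ₁, hfin⟩ θ₂ ⟨hθ₂, -⟩ hlt
  have hsplit : arclengthAtAngle θ₂ =
      arclengthAtAngle θ₁ + ∫⁻ u in Ioc θ₁ θ₂, ENNReal.ofReal (2 * √(sin u))⁻¹ := by
    rw [arclengthAtAngle, arclengthAtAngle, ← lintegral_union measurableSet_Ioc
      (Ioc_disjoint_Ioc_of_le le_rfl), Ioc_union_Ioc_eq_Ioc hθ₁.1 hlt.le]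
  have hlower : ∀ u ∈ Ioo θ₁ θ₂, ENNReal.ofReal 2⁻¹ ≤ ENNReal.ofReal (2 * √(sin u))⁻¹ := by
    intro u hu
    have hsin : 0 < sin u := sin_pos_of_pos_of_lt_pi (hθ₁.1.trans_lt hu.1) (hu.2.trans_le hθ₂.2)
    refine ofReal_le_ofReal (inv_anti₀ (by positivity) ?_)
    linarith [sqrt_le_one.2 (sin_le_one u)]
  have hpos : 0 < ∫⁻ u in Ioc θ₁ θ₂, ENNReal.ofReal (2 * √(sin u))⁻¹ :=
    calc (0 : ℝ≥0∞) < ENNReal.ofReal 2⁻¹ * ENNReal.ofReal (θ₂ - θ₁) := by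
          simp [hlt]
      _ = ∫⁻ _ in Ioo θ₁ θ₂, ENNReal.ofReal 2⁻¹ := by
          rw [setLIntegral_const, Real.volume_Ioo]
      _ ≤ ∫⁻ u in Ioo θ₁ θ₂, ENNReal.ofReal (2 * √(sin u))⁻¹ :=
          setLIntegral_mono' measurableSet_Ioo hlower
      _ ≤ _ := lintegral_mono_set Ioo_subset_Ioc_self
  rw [hsplit]
  exact ENNReal.lt_add_right hfin hpos.ne'

namespace IsOptimalUTurn

variable {L : ℝ} {κ : ℝ → ℝ}

lemma dirAngle_mem_Icc (h : IsOptimalUTurn L κ) {s : ℝ} (hs : s ∈ Icc 0 L) :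
    dirAngle κ s ∈ Icc 0 π := by
  obtain ⟨hL, hκ, -, hκ_nonneg, hturn, -⟩ := h
  have hmono := monotoneOn_dirAngle hκ hκ_nonneg
  exact ⟨(dirAngle_zero κ).symm.trans_le (hmono ⟨le_rfl, hL.le⟩ hs hs.1),
    (hmono hs ⟨hL.le, le_rfl⟩ hs.2).trans_eq hturn⟩

lemma integral_mul_sqrt_sin_dirAngle (h : IsOptimalUTurn L κ) :
    ∫ s in (0:ℝ)..L, κ s * √(sin (dirAngle κ s)) = 2 * xi π := by
  obtain ⟨hL, hκ, -, hκ_nonneg, hturn, -⟩ := h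
  have hint : IntegrableOn (fun s => κ s * √(sin (dirAngle κ s))) (Ioc 0 L) := by
    refine (hκ.mul_continuousOn ?_).1
    rw [uIcc_of_le hL.le]
    exact (continuous_sin.comp_continuousOn (continuousOn_dirAngle hL.le hκ)).sqrt
  have hκ_nonneg' : ∀ᵐ s ∂volume.restrict (Ioc 0 L), 0 ≤ κ s :=
    ae_restrict_of_ae_restrict_of_subset Ioc_subset_Icc_self hκ_nonneg
  have hlintegral := lintegral_comp_dirAngle_mul hκ hκ_nonneg ⟨hL.le, le_rfl⟩
    (g := fun u => ENNReal.ofReal √(sin u)) (by fun_prop)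
  rw [show dirAngle κ L = π from hturn] at hlintegral
  have hsqrt_int : IntegrableOn (fun u => √(sin u)) (Ioc 0 π) :=
    (continuous_sin.sqrt.integrableOn_Icc).mono_set Ioc_subset_Icc_self
  rw [← integral_sqrt_sin_eq_two_mul_xi, intervalIntegral.integral_of_le hL.le,
    intervalIntegral.integral_of_le pi_pos.le]
  have hprod_nonneg : ∀ᵐ s ∂volume.restrict (Ioc 0 L), 0 ≤ κ s * √(sin (dirAngle κ s)) := by
    filter_upwards [hκ_nonneg'] with s hs using mul_nonneg hs (sqrt_nonneg _)
  refine (ofReal_eq_ofReal_iff (integral_nonneg_of_ae hprod_nonneg)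
    (integral_nonneg fun u => sqrt_nonneg _)).1 ?_
  rw [ofReal_integral_eq_lintegral_ofReal hint hprod_nonneg,
    ofReal_integral_eq_lintegral_ofReal hsqrt_int (ae_of_all _ fun u => sqrt_nonneg _),
    ← hlintegral]
  refine lintegral_congr_ae ?_
  filter_upwards [hκ_nonneg'] with s hs
  rw [mul_comm, ofReal_mul (sqrt_nonneg _)]

/-- Equality in Cauchy–Schwarz: `∫ (κ - 2w)² = ∫ κ² - 4 ∫ κ w + 4 ∫ w² = 4ξ(π) - 8ξ(π) + 4ξ(π)`
for `w = √(sin τ)`. -/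
lemma ae_eq_two_mul_sqrt_sin_dirAngle (h : IsOptimalUTurn L κ) :
    ∀ᵐ s ∂volume.restrict (Ioc 0 L), κ s = 2 * √(sin (dirAngle κ s)) := by
  have hκw := h.integral_mul_sqrt_sin_dirAngle
  have hmem : ∀ s ∈ Icc 0 L, dirAngle κ s ∈ Icc 0 π := fun s hs => h.dirAngle_mem_Icc hs
  obtain ⟨hL, hκ, hκ_sq, -, -, him, henergy, -⟩ := h
  set w := fun s => √(sin (dirAngle κ s))
  have hcont := continuousOn_dirAngle hL.le hκ
  rw [← uIcc_of_le hL.le] at hcont hmem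
  have hsin_int : IntervalIntegrable (fun s => sin (dirAngle κ s)) volume 0 L :=
    (continuous_sin.comp_continuousOn hcont).intervalIntegrable
  have hκw_int : IntervalIntegrable (fun s => κ s * w s) volume 0 L :=
    hκ.mul_continuousOn (continuous_sin.comp_continuousOn hcont).sqrt
  have hexpand : EqOn (fun s => (κ s - 2 * w s) ^ 2)
      (fun s => κ s ^ 2 - 4 * (κ s * w s) + 4 * sin (dirAngle κ s)) (uIcc 0 L) := by
    intro s hs
    have hw : w s ^ 2 = sin (dirAngle κ s) :=
      sq_sqrt (sin_nonneg_of_nonneg_of_le_pi (hmem s hs).1 (hmem s hs).2)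
    simp only [← hw]
    ring
  have hzero : ∫ s in (0:ℝ)..L, (κ s - 2 * w s) ^ 2 = 0 := by
    rw [intervalIntegral.integral_congr hexpand, intervalIntegral.integral_add
      (hκ_sq.sub (hκw_int.const_mul 4)) (hsin_int.const_mul 4),
      intervalIntegral.integral_sub hκ_sq (hκw_int.const_mul 4),
      intervalIntegral.integral_const_mul, intervalIntegral.integral_const_mul, hκw,
      ← im_curveOf hL.le hκ, him]
    linarith
  rw [intervalIntegral.integral_eq_zero_iff_of_nonneg_ae (ae_of_all _ fun s => sq_nonneg _)
    (((hκ_sq.sub (hκw_int.const_mul 4)).add (hsin_int.const_mul 4)).congr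
      (hexpand.symm.mono Ioc_subset_Icc_self)),
    Ioc_eq_empty hL.le.not_gt, union_empty] at hzero
  filter_upwards [hzero] with s hs
  linarith [pow_eq_zero_iff two_ne_zero |>.1 hs]

lemma arclengthAtAngle_dirAngle (h : IsOptimalUTurn L κ) {s : ℝ} (hs : s ∈ Icc 0 L) :
    arclengthAtAngle (dirAngle κ s) = ENNReal.ofReal s := by
  have hκ_eq := h.ae_eq_two_mul_sqrt_sin_dirAngle
  obtain ⟨hL, hκ, -, hκ_nonneg, -, -, -, hinterior⟩ := h
  rw [arclengthAtAngle, ← lintegral_comp_dirAngle_mul hκ hκ_nonneg hs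
    (by fun_prop), setLIntegral_congr Ioo_ae_eq_Ioc.symm,
    show ENNReal.ofReal s = volume (Ioo 0 s) by simp, ← setLIntegral_one]
  refine setLIntegral_congr_fun_ae measurableSet_Ioo ?_
  filter_upwards [(ae_restrict_iff' measurableSet_Ioc).1 hκ_eq] with r hr hrs
  have hr' : r ∈ Ioo 0 L := ⟨hrs.1, hrs.2.trans_le hs.2⟩
  have hsin : 0 < sin (dirAngle κ r) :=
    sin_pos_of_pos_of_lt_pi (hinterior r hr').1 (hinterior r hr').2
  rw [hr (Ioo_subset_Ioc_self hr'), ← ofReal_mul (by positivity), inv_mul_cancel₀ (by positivity),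
    ofReal_one]

lemma arclengthAtAngle_pi (h : IsOptimalUTurn L κ) : arclengthAtAngle π = ENNReal.ofReal L := by
  have hend := h.arclengthAtAngle_dirAngle ⟨h.1.le, le_rfl⟩
  rwa [show dirAngle κ L = π from h.2.2.2.2.1] at hend

lemma dirAngle_eq {L₁ L₂ : ℝ} {κ₁ κ₂ : ℝ → ℝ} (h₁ : IsOptimalUTurn L₁ κ₁)
    (h₂ : IsOptimalUTurn L₂ κ₂) {s : ℝ} (hs₁ : s ∈ Icc 0 L₁) (hs₂ : s ∈ Icc 0 L₂) :
    dirAngle κ₁ s = dirAngle κ₂ s := by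
  have hlength₁ := h₁.arclengthAtAngle_dirAngle hs₁
  have hlength₂ := h₂.arclengthAtAngle_dirAngle hs₂
  exact strictMonoOn_arclengthAtAngle.injOn
    ⟨h₁.dirAngle_mem_Icc hs₁, hlength₁ ▸ ofReal_ne_top⟩
    ⟨h₂.dirAngle_mem_Icc hs₂, hlength₂ ▸ ofReal_ne_top⟩ (hlength₁.trans hlength₂.symm)

end IsOptimalUTurn

theorem stmt_17 (L₁ L₂ : ℝ) (κ₁ κ₂ : ℝ → ℝ)
    (h₁ : IsOptimalUTurn L₁ κ₁) (h₂ : IsOptimalUTurn L₂ κ₂) :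
    L₁ = L₂ ∧ ∀ s ∈ Set.Icc 0 L₁, curveOf κ₁ s = curveOf κ₂ s := by
  have hL : L₁ = L₂ := (ofReal_eq_ofReal_iff h₁.1.le h₂.1.le).1
    (h₁.arclengthAtAngle_pi.symm.trans h₂.arclengthAtAngle_pi)
  refine ⟨hL, fun s hs => intervalIntegral.integral_congr fun r hr => ?_⟩
  rw [uIcc_of_le hs.1] at hr
  have hr₁ : r ∈ Icc 0 L₁ := ⟨hr.1, hr.2.trans hs.2⟩
  simp only [h₁.dirAngle_eq h₂ hr₁ (hL ▸ hr₁)]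
end
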